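/- arXiv:0902.1080 — 6 statements merged into one kernel-verified Lean document; each statement's English description precedes it below -/
import Mathlib

section
/- For any set A of attributes, each A-equivalence class of formal concepts of a database Db has a least element with respect to the order ⪯, where (X,Y) ⪯ (X',Y') iff X ⊆ X' and Y' ⊆ Y. -/
/-!
The least element of the class of a concept `(X, Y)` is the concept `(S'', S')` generated by
`S = X ∩ A`, where `'` denotes the two derivation operators of the database. Every concept
`(X', Y')` of the class has `S ⊆ X'`, so antitonicity of the derivations gives `Y' ⊆ S'` and
`S'' ⊆ X'' = X'`; taking `(X', Y') = (X, Y)` also yields `S'' ∩ A = S`.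
-/

variable {α β : Type*} [DecidableEq α] [DecidableEq β]

/-- `(X, Y)` is a 1-rectangle of the database with relation `Db`,
attribute set `AA` and object set `OO`: every attribute of `X` is in
relation with every object of `Y`. -/
def IsRect (Db : α → β → Prop) (AA : Finset α) (OO : Finset β)
    (X : Finset α) (Y : Finset β) : Prop :=
  X ⊆ AA ∧ Y ⊆ OO ∧ ∀ a ∈ X, ∀ o ∈ Y, Db a o

/-- A formal concept is a 1-rectangle that is maximal for componentwise
inclusion of bi-sets. -/
def IsConcept (Db : α → β → Prop) (AA : Finset α) (OO : Finset β)
    (X : Finset α) (Y : Finset β) : Prop :=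
  IsRect Db AA OO X Y ∧
    ∀ X' Y', IsRect Db AA OO X' Y' → X ⊆ X' → Y ⊆ Y' → X = X' ∧ Y = Y'

section Derivation

omit [DecidableEq α] [DecidableEq β]

variable {Db : α → β → Prop} {AA : Finset α} {OO : Finset β}

open Classical in
noncomputable def commonObjects (Db : α → β → Prop) (OO : Finset β) (X : Finset α) :
    Finset β :=
  OO.filter fun o => ∀ a ∈ X, Db a o

open Classical in
noncomputable def commonAttributes (Db : α → β → Prop) (AA : Finset α) (Y : Finset β) :
    Finset α :=
  AA.filter fun a => ∀ o ∈ Y, Db a o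

theorem mem_commonObjects {X : Finset α} {o : β} :
    o ∈ commonObjects Db OO X ↔ o ∈ OO ∧ ∀ a ∈ X, Db a o := by
  simp only [commonObjects, Finset.mem_filter]

theorem mem_commonAttributes {Y : Finset β} {a : α} :
    a ∈ commonAttributes Db AA Y ↔ a ∈ AA ∧ ∀ o ∈ Y, Db a o := by
  simp only [commonAttributes, Finset.mem_filter]

theorem commonObjects_subset (X : Finset α) : commonObjects Db OO X ⊆ OO := fun _ ho =>
  (mem_commonObjects.1 ho).1

theorem commonAttributes_subset (Y : Finset β) : commonAttributes Db AA Y ⊆ AA := fun _ ha =>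
  (mem_commonAttributes.1 ha).1

theorem commonObjects_anti {X X' : Finset α} (hX : X ⊆ X') :
    commonObjects Db OO X' ⊆ commonObjects Db OO X := fun _ ho =>
  mem_commonObjects.2
    ⟨(mem_commonObjects.1 ho).1, fun a ha => (mem_commonObjects.1 ho).2 a (hX ha)⟩

theorem commonAttributes_anti {Y Y' : Finset β} (hY : Y ⊆ Y') :
    commonAttributes Db AA Y' ⊆ commonAttributes Db AA Y := fun _ ha =>
  mem_commonAttributes.2
    ⟨(mem_commonAttributes.1 ha).1, fun o ho => (mem_commonAttributes.1 ha).2 o (hY ho)⟩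

theorem IsRect.subset_commonObjects {X : Finset α} {Y : Finset β}
    (h : IsRect Db AA OO X Y) : Y ⊆ commonObjects Db OO X := fun o ho =>
  mem_commonObjects.2 ⟨h.2.1 ho, fun a ha => h.2.2 a ha o ho⟩

theorem IsRect.subset_commonAttributes {X : Finset α} {Y : Finset β}
    (h : IsRect Db AA OO X Y) : X ⊆ commonAttributes Db AA Y := fun a ha =>
  mem_commonAttributes.2 ⟨h.1 ha, fun o ho => h.2.2 a ha o ho⟩

theorem isRect_commonAttributes (Y : Finset β) (hY : Y ⊆ OO) :
    IsRect Db AA OO (commonAttributes Db AA Y) Y :=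
  ⟨commonAttributes_subset Y, hY, fun _ ha => (mem_commonAttributes.1 ha).2⟩

theorem IsConcept.commonAttributes_eq {X : Finset α} {Y : Finset β}
    (h : IsConcept Db AA OO X Y) : commonAttributes Db AA Y = X :=
  (h.2 _ _ (isRect_commonAttributes Y h.1.2.1) h.1.subset_commonAttributes subset_rfl).1.symm

noncomputable def attrClosure (Db : α → β → Prop) (AA : Finset α) (OO : Finset β)
    (S : Finset α) : Finset α :=
  commonAttributes Db AA (commonObjects Db OO S)

theorem subset_attrClosure {S : Finset α} (hS : S ⊆ AA) : S ⊆ attrClosure Db AA OO S :=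
  IsRect.subset_commonAttributes (OO := OO)
    ⟨hS, commonObjects_subset S, fun a ha _ ho => (mem_commonObjects.1 ho).2 a ha⟩

theorem isConcept_attrClosure {S : Finset α} (hS : S ⊆ AA) :
    IsConcept Db AA OO (attrClosure Db AA OO S) (commonObjects Db OO S) := by
  refine ⟨isRect_commonAttributes _ (commonObjects_subset S), fun X' Y' hr hX hY => ?_⟩
  have hY' : Y' ⊆ commonObjects Db OO S :=
    hr.subset_commonObjects.trans (commonObjects_anti ((subset_attrClosure hS).trans hX))
  have hX' := hr.subset_commonAttributes.trans (commonAttributes_anti hY)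
  exact ⟨hX.antisymm hX', hY.antisymm hY'⟩

theorem IsConcept.subset_commonObjects {S X : Finset α} {Y : Finset β}
    (h : IsConcept Db AA OO X Y) (hS : S ⊆ X) : Y ⊆ commonObjects Db OO S :=
  h.1.subset_commonObjects.trans (commonObjects_anti hS)

theorem IsConcept.attrClosure_subset {S X : Finset α} {Y : Finset β}
    (h : IsConcept Db AA OO X Y) (hS : S ⊆ X) : attrClosure Db AA OO S ⊆ X :=
  h.commonAttributes_eq ▸ commonAttributes_anti (h.subset_commonObjects hS)

end Derivation

/-- Every `A`-equivalence class of formal concepts has a least element for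
the order `(X,Y) ⪯ (X',Y') ↔ X ⊆ X' ∧ Y' ⊆ Y`. -/
theorem A_equiv_class_has_least (Db : α → β → Prop) (AA : Finset α) (OO : Finset β)
    (A : Finset α) (X : Finset α) (Y : Finset β)
    (h : IsConcept Db AA OO X Y) :
    ∃ X₀ Y₀, IsConcept Db AA OO X₀ Y₀ ∧ X₀ ∩ A = X ∩ A ∧
      ∀ X' Y', IsConcept Db AA OO X' Y' → X' ∩ A = X ∩ A → X₀ ⊆ X' ∧ Y' ⊆ Y₀ := by
  have hS : X ∩ A ⊆ AA := Finset.inter_subset_left.trans h.1.1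
  have hS_of_equiv {X' : Finset α} (hX' : X' ∩ A = X ∩ A) : X ∩ A ⊆ X' :=
    hX' ▸ Finset.inter_subset_left
  refine ⟨attrClosure Db AA OO (X ∩ A), commonObjects Db OO (X ∩ A), isConcept_attrClosure hS,
    ?_, fun X' Y' h' hX' =>
      ⟨h'.attrClosure_subset (hS_of_equiv hX'), h'.subset_commonObjects (hS_of_equiv hX')⟩⟩
  exact (Finset.inter_subset_inter_right (h.attrClosure_subset (hS_of_equiv rfl))).antisymm
    (Finset.subset_inter (subset_attrClosure hS) Finset.inter_subset_right)
end

section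
/- Let Db be a database and A a set of attributes, and let π_A(Db) be the database obtained by restricting Db to the attributes in A. If (X, Y) is a formal concept of π_A(Db), then there exists a set of attributes X' with X' ∩ A = X such that (X', Y) is a formal concept of Db. -/
/-!
Take `X'` to be the set of all attributes of `Db` related to every object of `Y`. Its trace on `A`
consists of the attributes of `A` related to every object of `Y`, which is `X` by maximality of
`(X, Y)` in `π_A(Db)`. Any rectangle of `Db` above `(X', Y)` with objects `Y'` makes `(X, Y')` a
rectangle of `π_A(Db)` above `(X, Y)`, so `Y' = Y`, and then its attributes lie in `X'`.
-/

variable {α β : Type*} [DecidableEq α] [DecidableEq β]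

open Classical in
/-- The derivation `Y ↦ Y'` of formal concept analysis, taken inside the attribute set `AA`. -/
noncomputable def commonAttrs (Db : α → β → Prop) (AA : Finset α) (Y : Finset β) : Finset α :=
  {a ∈ AA | ∀ o ∈ Y, Db a o}

section

omit [DecidableEq α] [DecidableEq β]

variable {Db : α → β → Prop} {AA : Finset α} {OO : Finset β} {X : Finset α} {Y : Finset β}

theorem mem_commonAttrs {a : α} : a ∈ commonAttrs Db AA Y ↔ a ∈ AA ∧ ∀ o ∈ Y, Db a o := by
  classical
  simp [commonAttrs]

theorem isRect_commonAttrs (hY : Y ⊆ OO) : IsRect Db AA OO (commonAttrs Db AA Y) Y :=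
  ⟨fun _ ha => (mem_commonAttrs.1 ha).1, hY, fun _ ha => (mem_commonAttrs.1 ha).2⟩

theorem IsRect.subset_commonAttrs (h : IsRect Db AA OO X Y) : X ⊆ commonAttrs Db AA Y :=
  fun a ha => mem_commonAttrs.2 ⟨h.1 ha, h.2.2 a ha⟩

theorem IsConcept.eq_commonAttrs (h : IsConcept Db AA OO X Y) : X = commonAttrs Db AA Y :=
  (h.2 _ _ (isRect_commonAttrs h.1.2.1) h.1.subset_commonAttrs subset_rfl).1

end

omit [DecidableEq β] in
theorem commonAttrs_inter_of_subset (Db : α → β → Prop) {A AA : Finset α} (hA : A ⊆ AA)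
    (Y : Finset β) : commonAttrs Db AA Y ∩ A = commonAttrs Db A Y := by
  ext a
  simp only [Finset.mem_inter, mem_commonAttrs]
  exact ⟨fun ⟨⟨_, hY⟩, haA⟩ => ⟨haA, hY⟩, fun ⟨haA, hY⟩ => ⟨⟨hA haA, hY⟩, haA⟩⟩

/-- A concept `(X,Y)` of the projected database `π_A(Db)` (same relation,
attribute set restricted to `A`) extends to a concept `(X',Y)` of `Db`
with `X' ∩ A = X`. -/
theorem concept_extension (Db : α → β → Prop) (AA : Finset α) (OO : Finset β)
    (A : Finset α) (hA : A ⊆ AA) (X : Finset α) (Y : Finset β)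
    (h : IsConcept Db A OO X Y) :
    ∃ X' : Finset α, X' ∩ A = X ∧ IsConcept Db AA OO X' Y := by
  have hX : X = commonAttrs Db A Y := h.eq_commonAttrs
  have hXX' : X ⊆ commonAttrs Db AA Y := by
    rw [hX, ← commonAttrs_inter_of_subset Db hA]
    exact Finset.inter_subset_left
  refine ⟨commonAttrs Db AA Y, by rw [commonAttrs_inter_of_subset Db hA, hX],
    isRect_commonAttrs h.1.2.1, fun X'' Y' hr hX'' hY => ?_⟩
  have hYY' : Y = Y' :=
    (h.2 X Y' ⟨h.1.1, hr.2.1, fun a ha => hr.2.2 a (hX'' (hXX' ha))⟩ subset_rfl hY).2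
  subst hYY'
  exact ⟨hX''.antisymm hr.subset_commonAttrs, rfl⟩
end

section
/- If (X,Y) is a formal concept of Db that is the least element of its A-equivalence class, then (X ∩ A, Y) is a formal concept of the projected database π_A(Db) (the ⊇ direction of the projection theorem). -/
/-!
Any 1-rectangle `(X₂, Y₂)` of `π_A(Db)` above `(X ∩ A, Y)` has `X₂ ⊆ X` by maximality of `(X, Y)`,
so `X₂ = X ∩ A`. Extending `(X ∩ A, Y₂)` to a concept `(X₀, Y₀)` of `Db` gives a concept
`A`-equivalent to `(X, Y)`, whence `Y₂ ⊆ Y₀ ⊆ Y` because `(X, Y)` is least in its class.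
-/

variable {α β : Type*} [DecidableEq α] [DecidableEq β]

section Rectangles

omit [DecidableEq α] [DecidableEq β]

variable {Db : α → β → Prop} {A AA : Finset α} {OO : Finset β} {X X' : Finset α}
  {Y Y' : Finset β}

lemma IsRect.mono_attrs (h : IsRect Db A OO X Y) (hA : A ⊆ AA) : IsRect Db AA OO X Y :=
  ⟨h.1.trans hA, h.2.1, h.2.2⟩

lemma IsRect.mono_fst (h : IsRect Db AA OO X Y) (hX : X' ⊆ X) : IsRect Db AA OO X' Y :=
  ⟨hX.trans h.1, h.2.1, fun a ha => h.2.2 a (hX ha)⟩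

lemma IsRect.mono_snd (h : IsRect Db AA OO X Y) (hY : Y' ⊆ Y) : IsRect Db AA OO X Y' :=
  ⟨h.1, hY.trans h.2.1, fun a ha o ho => h.2.2 a ha o (hY ho)⟩

lemma IsRect.inter_attrs [DecidableEq α] (h : IsRect Db AA OO X Y) (A : Finset α) :
    IsRect Db A OO (X ∩ A) Y :=
  ⟨Finset.inter_subset_right, h.2.1, fun a ha => h.2.2 a (Finset.mem_of_mem_inter_left ha)⟩

lemma IsRect.union_fst [DecidableEq α] (h : IsRect Db AA OO X Y) (h' : IsRect Db AA OO X' Y) :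
    IsRect Db AA OO (X ∪ X') Y := by
  refine ⟨Finset.union_subset h.1 h'.1, h.2.1, fun a ha => ?_⟩
  rcases Finset.mem_union.mp ha with ha | ha
  · exact h.2.2 a ha
  · exact h'.2.2 a ha

lemma IsConcept.subset_fst_of_isRect [DecidableEq α] (h : IsConcept Db AA OO X Y)
    (h' : IsRect Db AA OO X' Y') (hY : Y ⊆ Y') : X' ⊆ X := by
  have hX := (h.2 _ _ (h.1.union_fst (h'.mono_snd hY)) Finset.subset_union_left subset_rfl).1
  rw [hX]
  exact Finset.subset_union_right

lemma IsRect.exists_isConcept_le (h : IsRect Db AA OO X Y) :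
    ∃ X₀ Y₀, IsConcept Db AA OO X₀ Y₀ ∧ X ⊆ X₀ ∧ Y ⊆ Y₀ := by
  let rects : Set (Finset α × Finset β) := {p | IsRect Db AA OO p.1 p.2}
  have hfin : rects.Finite :=
    ((AA.powerset ×ˢ OO.powerset).finite_toSet).subset fun p hp => by
      simpa using And.intro hp.1 hp.2.1
  obtain ⟨⟨X₀, Y₀⟩, hle, hmax⟩ := hfin.exists_le_maximal (a := (X, Y)) h
  refine ⟨X₀, Y₀, ⟨hmax.1, fun X' Y' h' hX hY => ?_⟩, hle.1, hle.2⟩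
  have hge := hmax.2 (y := (X', Y')) h' ⟨hX, hY⟩
  exact ⟨subset_antisymm hX hge.1, subset_antisymm hY hge.2⟩

end Rectangles

/-- If a concept `(X,Y)` of `Db` is the least element of its
`A`-equivalence class then `(X ∩ A, Y)` is a concept of the projected
database `π_A(Db)`. -/
theorem projection_supset (Db : α → β → Prop) (AA : Finset α) (OO : Finset β)
    (A : Finset α) (hA : A ⊆ AA) (X : Finset α) (Y : Finset β)
    (h : IsConcept Db AA OO X Y)
    (hle : ∀ X' Y', IsConcept Db AA OO X' Y' → X' ∩ A = X ∩ A → X ⊆ X' ∧ Y' ⊆ Y) :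
    IsConcept Db A OO (X ∩ A) Y := by
  refine ⟨h.1.inter_attrs A, fun X₂ Y₂ h₂ hX hY => ?_⟩
  have hX₂ : X₂ = X ∩ A :=
    subset_antisymm
      (Finset.subset_inter (h.subset_fst_of_isRect (h₂.mono_attrs hA) hY) h₂.1) hX
  subst hX₂
  obtain ⟨X₀, Y₀, h₀, hX₀, hY₀⟩ := (h₂.mono_attrs hA).exists_isConcept_le
  have hequiv : X₀ ∩ A = X ∩ A :=
    subset_antisymm
      (Finset.subset_inter
        (h.subset_fst_of_isRect (h₀.1.mono_fst Finset.inter_subset_left) (hY.trans hY₀))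
        Finset.inter_subset_right)
      (Finset.subset_inter hX₀ Finset.inter_subset_right)
  exact ⟨rfl, subset_antisymm hY (hY₀.trans (hle X₀ Y₀ h₀ hequiv).2)⟩
end

section
/- Let 𝒞 be a collection of formal concepts of a database Db, A a set of attributes, and p a selection predicate on bi-sets such that p(X ∩ A, Y) = p(X, Y) for all concepts (X,Y). Then π_A(σ_p(𝒞)) = σ_p(π_A(𝒞)), i.e., projection onto A and selection by p commute. -/
variable {α β : Type*} [DecidableEq α] [DecidableEq β]

/-- The set of least elements of the `A`-equivalence classes of the concepts
of `Db`. -/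
def LEA (Db : α → β → Prop) (AA : Finset α) (OO : Finset β) (A : Finset α) :
    Set (Finset α × Finset β) :=
  {C | IsConcept Db AA OO C.1 C.2 ∧
    ∀ X' Y', IsConcept Db AA OO X' Y' → X' ∩ A = C.1 ∩ A → C.1 ⊆ X' ∧ Y' ⊆ C.2}

/-- Selection of a collection of concepts by a predicate. -/
def sel (p : Finset α → Finset β → Prop) (C : Set (Finset α × Finset β)) :
    Set (Finset α × Finset β) :=
  {c ∈ C | p c.1 c.2}

/-- Projection of a collection of concepts of `Db` on the attribute set `A`. -/
def projColl (Db : α → β → Prop) (AA : Finset α) (OO : Finset β) (A : Finset α)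
    (C : Set (Finset α × Finset β)) : Set (Finset α × Finset β) :=
  (fun c : Finset α × Finset β => (c.1 ∩ A, c.2)) '' (C ∩ LEA Db AA OO A)

theorem Set.image_sep_eq_inter_of_iff {γ δ : Type*} {f : γ → δ} {s : Set γ} {P : γ → Prop}
    {Q : δ → Prop} (h : ∀ x ∈ s, Q (f x) ↔ P x) : f '' {x ∈ s | P x} = f '' s ∩ {y | Q y} := by
  rw [← Set.image_inter_preimage]
  congr 1
  ext x
  exact and_congr_right fun hx => (h x hx).symm

theorem proj_sel_commute_general (Db : α → β → Prop) (AA : Finset α) (OO : Finset β)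
    (A : Finset α) (p : Finset α → Finset β → Prop)
    (C : Set (Finset α × Finset β))
    (hp : ∀ X Y, IsConcept Db AA OO X Y → (p (X ∩ A) Y ↔ p X Y)) :
    projColl Db AA OO A (sel p C) = sel p (projColl Db AA OO A C) := by
  -- members of `LEA` are concepts
  have hpA : ∀ c ∈ C ∩ LEA Db AA OO A, p (c.1 ∩ A) c.2 ↔ p c.1 c.2 :=
    fun c hc => hp c.1 c.2 hc.2.1
  have hsel_inter : sel p C ∩ LEA Db AA OO A = sel p (C ∩ LEA Db AA OO A) :=
    Set.ext fun _ => and_right_comm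
  rw [projColl, hsel_inter, sel, Set.image_sep_eq_inter_of_iff (Q := fun c => p c.1 c.2) hpA]
  rfl

/-- Projection on `A` and selection by `p` commute provided
`p (X ∩ A) Y = p X Y` for all concepts `(X,Y)`. -/
theorem proj_sel_commute (Db : α → β → Prop) (AA : Finset α) (OO : Finset β)
    (A : Finset α) (p : Finset α → Finset β → Prop)
    (C : Set (Finset α × Finset β))
    (hC : ∀ c ∈ C, IsConcept Db AA OO c.1 c.2)
    (hp : ∀ X Y, IsConcept Db AA OO X Y → (p (X ∩ A) Y ↔ p X Y)) :
    projColl Db AA OO A (sel p C) = sel p (projColl Db AA OO A C) :=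
  proj_sel_commute_general Db AA OO A p C hp
end

section
/- Let (X,Y) be a formal concept of Db that is the least element of its A-equivalence class, and suppose (X',Y') is a 1-rectangle of π_A(Db) containing (X ∩ A, Y) componentwise. Then X' = X ∩ A. -/
variable {α β : Type*} [DecidableEq α] [DecidableEq β]

theorem IsRect.mono {α β : Type*} {Db : α → β → Prop} {A AA : Finset α} {OO : Finset β}
    {X : Finset α} {Y Y' : Finset β} (hr : IsRect Db A OO X Y') (hA : A ⊆ AA) (hY : Y ⊆ Y') :
    IsRect Db AA OO X Y :=
  ⟨hr.1.trans hA, hY.trans hr.2.1, fun a ha o ho => hr.2.2 a ha o (hY ho)⟩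

theorem IsRect.union {α β : Type*} [DecidableEq α] {Db : α → β → Prop} {AA : Finset α}
    {OO : Finset β} {X₁ X₂ : Finset α} {Y : Finset β}
    (h₁ : IsRect Db AA OO X₁ Y) (h₂ : IsRect Db AA OO X₂ Y) :
    IsRect Db AA OO (X₁ ∪ X₂) Y := by
  refine ⟨Finset.union_subset h₁.1 h₂.1, h₁.2.1, fun a ha o ho => ?_⟩
  rcases Finset.mem_union.mp ha with ha | ha
  · exact h₁.2.2 a ha o ho
  · exact h₂.2.2 a ha o ho

theorem IsConcept.subset_of_isRect {α β : Type*} [DecidableEq α] {Db : α → β → Prop}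
    {AA : Finset α} {OO : Finset β} {X X' : Finset α} {Y : Finset β}
    (h : IsConcept Db AA OO X Y) (hr : IsRect Db AA OO X' Y) : X' ⊆ X := by
  have hX : X = X ∪ X' :=
    (h.2 _ _ (h.1.union hr) Finset.subset_union_left le_rfl).1
  exact hX ▸ Finset.subset_union_right

theorem rect_above_least_general (Db : α → β → Prop) (AA : Finset α) (OO : Finset β)
    (A : Finset α) (hA : A ⊆ AA) (X X' : Finset α) (Y Y' : Finset β)
    (h : IsConcept Db AA OO X Y)
    (hr : IsRect Db A OO X' Y') (hX : X ∩ A ⊆ X') (hY : Y ⊆ Y') :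
    X' = X ∩ A := by
  have hsub : X' ⊆ X := h.subset_of_isRect (hr.mono hA hY)
  exact Finset.Subset.antisymm (Finset.subset_inter hsub hr.1) hX

/-- If `(X,Y)` is a concept of `Db` that is the least element of its
`A`-equivalence class, and `(X',Y')` is a 1-rectangle of `π_A(Db)`
containing `(X ∩ A, Y)` componentwise, then `X' = X ∩ A`. -/
theorem rect_above_least (Db : α → β → Prop) (AA : Finset α) (OO : Finset β)
    (A : Finset α) (hA : A ⊆ AA) (X X' : Finset α) (Y Y' : Finset β)
    (h : IsConcept Db AA OO X Y)
    (hle : ∀ X₁ Y₁, IsConcept Db AA OO X₁ Y₁ → X₁ ∩ A = X ∩ A → X ⊆ X₁ ∧ Y₁ ⊆ Y)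
    (hr : IsRect Db A OO X' Y') (hX : X ∩ A ⊆ X') (hY : Y ⊆ Y') :
    X' = X ∩ A :=
  rect_above_least_general Db AA OO A hA X X' Y Y' h hr hX hY
end

section
/- If C₁ = (X₁,Y₁) and C₂ = (X₂,Y₂) are A-equivalent formal concepts of Db and C = (X₁ ∩ X₂, Y) is a formal concept with Y₁ ∪ Y₂ ⊆ Y, then C is A-equivalent to both C₁ and C₂, and C ⪯ C₁ and C ⪯ C₂. -/
variable {α β : Type*} [DecidableEq α] [DecidableEq β]

theorem inf_inf_eq_inf_of_inf_eq {L : Type*} [SemilatticeInf L] {a b c : L}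
    (h : a ⊓ c = b ⊓ c) : a ⊓ b ⊓ c = a ⊓ c := by
  rw [inf_inf_distrib_right, ← h, inf_idem]

theorem inter_concept_below_general
    (A : Finset α) (X₁ X₂ : Finset α) (Y₁ Y₂ Y : Finset β)
    (heq : X₁ ∩ A = X₂ ∩ A)
    (hY : Y₁ ∪ Y₂ ⊆ Y) :
    ((X₁ ∩ X₂) ∩ A = X₁ ∩ A ∧ (X₁ ∩ X₂) ∩ A = X₂ ∩ A) ∧
    (X₁ ∩ X₂ ⊆ X₁ ∧ Y₁ ⊆ Y) ∧ (X₁ ∩ X₂ ⊆ X₂ ∧ Y₂ ⊆ Y) := by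
  have hA : X₁ ∩ X₂ ∩ A = X₁ ∩ A := inf_inf_eq_inf_of_inf_eq heq
  exact ⟨⟨hA, hA.trans heq⟩, ⟨Finset.inter_subset_left, Finset.subset_union_left.trans hY⟩,
    ⟨Finset.inter_subset_right, Finset.subset_union_right.trans hY⟩⟩

/-- If `(X₁,Y₁)` and `(X₂,Y₂)` are `A`-equivalent concepts and
`(X₁ ∩ X₂, Y)` is a concept with `Y₁ ∪ Y₂ ⊆ Y`, then it is `A`-equivalent
to both and below both for `⪯`. -/
theorem inter_concept_below (Db : α → β → Prop) (AA : Finset α) (OO : Finset β)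
    (A : Finset α) (X₁ X₂ : Finset α) (Y₁ Y₂ Y : Finset β)
    (h₁ : IsConcept Db AA OO X₁ Y₁) (h₂ : IsConcept Db AA OO X₂ Y₂)
    (heq : X₁ ∩ A = X₂ ∩ A)
    (h : IsConcept Db AA OO (X₁ ∩ X₂) Y) (hY : Y₁ ∪ Y₂ ⊆ Y) :
    ((X₁ ∩ X₂) ∩ A = X₁ ∩ A ∧ (X₁ ∩ X₂) ∩ A = X₂ ∩ A) ∧
    (X₁ ∩ X₂ ⊆ X₁ ∧ Y₁ ⊆ Y) ∧ (X₁ ∩ X₂ ⊆ X₂ ∧ Y₂ ⊆ Y) :=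
  inter_concept_below_general A X₁ X₂ Y₁ Y₂ Y heq hY
end
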